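/- arXiv:math/0208228 — 2 statements merged into one kernel-verified Lean document; each statement's English description precedes it below -/
import Mathlib

section
/- Let n ≥ 2 and let a₂,…,aₙ : ℝ → ℝ be functions with a₂ differentiable at 0, such that for every t ∈ ℝ the monic polynomial P(t)(x) = xⁿ + a₂(t)xⁿ⁻² - a₃(t)xⁿ⁻³ + ⋯ + (-1)ⁿaₙ(t) (i.e. with a₁ ≡ 0) has all roots real. If a₂(0) = 0 then a₂'(0) = 0; that is, a₂ vanishes at least to second order at 0. -/
/-!
If all roots `x₁, …, xₙ` of `P(t)` are real, Vieta's formulas give `∑ xᵢ = a₁(t) = 0` and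
`a₂(t) = e₂(x) = ((∑ xᵢ)² - ∑ xᵢ²) / 2 = -(∑ xᵢ²) / 2 ≤ 0`. Hence `a₂` attains its maximum at
each of its zeros, and by Fermat's theorem its derivative vanishes there.
-/

open Polynomial

/-- The monic polynomial curve `P(t)(x) = xⁿ - a₁(t)xⁿ⁻¹ + a₂(t)xⁿ⁻² - ⋯ + (-1)ⁿ aₙ(t)`. -/
noncomputable def curvePoly (n : ℕ) (a : ℕ → ℝ → ℝ) (t : ℝ) : Polynomial ℝ :=
  X ^ n + ∑ k ∈ Finset.Icc 1 n, C ((-1 : ℝ) ^ k * a k t) * X ^ (n - k)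

/-- `x : T → ℝⁿ` parametrizes the roots of `P` on `T`: for each `t ∈ T` the multiset
`{x₁(t),…,xₙ(t)}` equals the multiset of roots of `P(t)` with multiplicity. -/
def IsRootParamOn (n : ℕ) (a : ℕ → ℝ → ℝ) (T : Set ℝ) (x : Fin n → ℝ → ℝ) : Prop :=
  ∀ t ∈ T, (curvePoly n a t).roots = Multiset.map (fun i => x i t) (Finset.univ : Finset (Fin n)).val

namespace Multiset

variable {R : Type*}

theorem esymm_one [CommSemiring R] (s : Multiset R) : s.esymm 1 = s.sum := by
  simp [esymm, powersetCard_one, map_map]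

theorem esymm_two_cons [CommSemiring R] (x : R) (s : Multiset R) :
    (x ::ₘ s).esymm 2 = s.esymm 2 + x * s.sum := by
  rw [esymm, esymm, powersetCard_cons, powersetCard_one, map_add, sum_add, map_map, map_map]
  congr 1
  simpa [Function.comp_def] using sum_map_mul_left (s := s) (f := id) (a := x)

theorem sq_sum_eq_sum_sq_add_two_mul_esymm_two [CommSemiring R] (s : Multiset R) :
    s.sum ^ 2 = (s.map (· ^ 2)).sum + 2 * s.esymm 2 := by
  induction s using Multiset.induction with
  | empty => simp [show (0 : Multiset R).esymm 2 = 0 from rfl]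
  | cons x s ih =>
    rw [sum_cons, map_cons, sum_cons, esymm_two_cons]
    calc (x + s.sum) ^ 2 = x ^ 2 + s.sum ^ 2 + 2 * (x * s.sum) := by ring
      _ = _ := by rw [ih]; ring

theorem esymm_two_nonpos_of_sum_eq_zero [CommRing R] [LinearOrder R] [IsStrictOrderedRing R]
    {s : Multiset R} (hs : s.sum = 0) : s.esymm 2 ≤ 0 := by
  have hsq := sq_sum_eq_sum_sq_add_two_mul_esymm_two s
  have hnonneg : 0 ≤ (s.map (· ^ 2)).sum :=
    sum_nonneg fun _ hy => by obtain ⟨x, -, rfl⟩ := mem_map.1 hy; positivity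
  rw [hs, zero_pow two_ne_zero] at hsq
  linarith

end Multiset

theorem degree_sum_Icc_C_mul_X_pow_sub_lt {R : Type*} [Semiring R] (n : ℕ) (c : ℕ → R) :
    (∑ k ∈ Finset.Icc 1 n, C (c k) * X ^ (n - k)).degree < (n : WithBot ℕ) := by
  refine (degree_sum_le _ _).trans_lt ((Finset.sup_lt_iff (WithBot.bot_lt_coe n)).2 ?_)
  intro k hk
  have hk := Finset.mem_Icc.1 hk
  exact (degree_C_mul_X_pow_le _ _).trans_lt (WithBot.coe_lt_coe.2 (Nat.sub_lt (by omega) hk.1))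

section curvePoly

variable (n : ℕ) (a : ℕ → ℝ → ℝ) (t : ℝ)

theorem curvePoly_monic : (curvePoly n a t).Monic :=
  monic_X_pow_add (degree_sum_Icc_C_mul_X_pow_sub_lt n _)

theorem natDegree_curvePoly : (curvePoly n a t).natDegree = n := by
  rw [curvePoly, natDegree_add_eq_left_of_degree_lt, natDegree_X_pow]
  simpa only [degree_X_pow] using degree_sum_Icc_C_mul_X_pow_sub_lt n _

variable {n} {k : ℕ}

theorem coeff_curvePoly (hk : 1 ≤ k) (hkn : k ≤ n) :
    (curvePoly n a t).coeff (n - k) = (-1 : ℝ) ^ k * a k t := by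
  rw [curvePoly, coeff_add, coeff_X_pow, if_neg (by omega), zero_add, finsetSum_coeff,
    Finset.sum_eq_single_of_mem k (Finset.mem_Icc.2 ⟨hk, hkn⟩), coeff_C_mul_X_pow, if_pos rfl]
  · intro j hj hjk
    have hj := Finset.mem_Icc.1 hj
    rw [coeff_C_mul, coeff_X_pow, if_neg (by omega), mul_zero]

theorem esymm_roots_curvePoly (hk : 1 ≤ k) (hkn : k ≤ n)
    (hroots : (curvePoly n a t).roots.card = n) :
    (curvePoly n a t).roots.esymm k = a k t := by
  have hvieta := coeff_eq_esymm_roots_of_card (hroots.trans (natDegree_curvePoly n a t).symm)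
    (k := n - k) (by rw [natDegree_curvePoly]; omega)
  rw [coeff_curvePoly a t hk hkn, (curvePoly_monic n a t).leadingCoeff, natDegree_curvePoly,
    Nat.sub_sub_self hkn, one_mul] at hvieta
  exact (mul_left_cancel₀ (pow_ne_zero _ (by norm_num)) hvieta).symm

theorem a_two_nonpos_of_card_roots (hn : 2 ≤ n) (ha1 : a 1 t = 0)
    (hroots : (curvePoly n a t).roots.card = n) : a 2 t ≤ 0 := by
  rw [← esymm_roots_curvePoly a t one_le_two hn hroots]
  refine Multiset.esymm_two_nonpos_of_sum_eq_zero ?_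
  rw [← Multiset.esymm_one, esymm_roots_curvePoly a t le_rfl (by omega) hroots, ha1]

end curvePoly

theorem a2_vanishes_to_second_order_general
    (n : ℕ) (hn : 2 ≤ n) (a : ℕ → ℝ → ℝ)
    (ha1 : ∀ t : ℝ, a 1 t = 0)
    (hreal : ∀ t : ℝ, ((curvePoly n a t).roots).card = n)
    (h0 : a 2 0 = 0) :
    deriv (a 2) 0 = 0 := by
  have hmax : IsLocalMax (a 2) 0 := Filter.Eventually.of_forall fun t => by
    rw [h0]
    exact a_two_nonpos_of_card_roots a t hn (ha1 t) (hreal t)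
  exact hmax.deriv_eq_zero

theorem a2_vanishes_to_second_order
    (n : ℕ) (hn : 2 ≤ n) (a : ℕ → ℝ → ℝ)
    (ha1 : ∀ t : ℝ, a 1 t = 0)
    (hdiff : DifferentiableAt ℝ (a 2) 0)
    (hreal : ∀ t : ℝ, ((curvePoly n a t).roots).card = n)
    (h0 : a 2 0 = 0) :
    deriv (a 2) 0 = 0 :=
  a2_vanishes_to_second_order_general n hn a ha1 hreal h0
end

section
/- Let n ≥ 1 and let a₁,…,aₙ : ℝ → ℝ be continuous such that for all t the monic polynomial P(t)(x) = xⁿ - a₁(t)xⁿ⁻¹ + ⋯ + (-1)ⁿaₙ(t) has all roots real. Let I be an open interval, t₀ ∈ I, and suppose: y = (y₁,…,yₙ) is a twice differentiable parametrization of the roots of P on I ∩ (-∞, t₀), and x = (x₁,…,xₙ) is a twice differentiable parametrization of the roots of P on a neighborhood of t₀. Then there exist a permutation π of {1,…,n} and a sequence tₘ ↗ t₀ in I such that y_{π(i)}(tₘ) = x_i(tₘ), y_{π(i)}'(tₘ) = x_i'(tₘ), and y_{π(i)}''(tₘ) = x_i''(tₘ) for all i and all m; consequently the map equal to (y_{π(i)})_i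 for t < t₀ and to x for t ≥ t₀ is a twice differentiable parametrization of the roots of P on an interval containing I ∩ (-∞, t₀] in its interior. -/
open Polynomial

/-!
Near `t₀` on the left both `y` and `x` parametrize the roots, so a left neighbourhood `W` of `t₀`
is covered by the finitely many matching sets `{t ∈ W | y ∘ σ = x at t}`. A subset of `ℝ` has
only countably many isolated points, so for some `σ` the points of the matching set that are
accumulation points of its accumulation points accumulate at `t₀`; at such points the first and
second derivatives of `y ∘ σ` and `x` agree as well.

For the pasting, the quotient `(y (σ i) s - x i s) / (s - t₀)` is continuous for `s < t₀` and
at every `s` equals one of the quotients `(x j s - x i s) / (s - t₀)`, each of which either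
converges or blows up as `s → t₀⁻`. It vanishes along points accumulating at `t₀`, so by the
intermediate value theorem it tends to `0`. At each point `y (σ i)` agrees with some `x j` on a
set accumulating there, so `y (σ i)'` also coincides pointwise with some `x j'`, and the same
argument one order higher gives the second derivative at `t₀`.
-/

open Filter Topology Set

theorem Fintype.exists_perm_comp_eq_of_map_univ_eq {ι α : Type*} [Fintype ι] {f g : ι → α}
    (h : Finset.univ.val.map f = Finset.univ.val.map g) :
    ∃ σ : Equiv.Perm ι, ∀ i, f (σ i) = g i := by
  classical
  have hcard (c : α) : Fintype.card {i // g i = c} = Fintype.card {i // f i = c} := by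
    have := congrArg (Multiset.count c) h
    simp only [Multiset.count_map] at this
    simp only [Fintype.card_subtype, Finset.card, Finset.filter_val]
    simpa [eq_comm] using this.symm
  exact ⟨Equiv.ofFiberEquiv fun c => Fintype.equivOfCardEq (hcard c),
    Equiv.ofFiberEquiv_map _⟩

theorem countable_diff_relDerivedSet {α : Type*} [TopologicalSpace α] [LinearOrder α]
    [OrderTopology α] [SecondCountableTopology α] (s : Set α) :
    (s \ relDerivedSet s).Countable := by
  refine (countable_setOfPred_isolated_left_within (s := s)).mono ?_
  rintro x ⟨hxs, hx⟩
  refine ⟨hxs, ?_⟩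
  have hacc : ¬ AccPt x (𝓟 s) := fun h => hx ⟨h, hxs⟩
  rw [accPt_principal_iff_nhdsWithin, not_neBot] at hacc
  exact le_bot_iff.1 (hacc ▸ nhdsWithin_mono _ fun y hy => ⟨hy.1, hy.2.ne⟩)

theorem Set.Countable.frequently_nhdsLT_notMem {s : Set ℝ} (hs : s.Countable) (t₀ : ℝ) :
    ∃ᶠ t in 𝓝[<] t₀, t ∉ s := by
  rw [frequently_iff]
  intro U hU
  obtain ⟨δ, hδ, hδU⟩ := mem_nhdsLT_iff_exists_Ioo_subset.1 hU
  obtain ⟨t, ht, htδ⟩ := (hs.dense_compl ℝ).exists_between hδ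
  exact ⟨t, hδU htδ, ht⟩

theorem exists_frequently_nhdsLT_mem_relDerivedSet_relDerivedSet {ι : Type*} [Finite ι]
    {s : ι → Set ℝ} {t₀ : ℝ} (hs : ∀ᶠ t in 𝓝[<] t₀, ∃ k, t ∈ s k) :
    ∃ k, ∃ᶠ t in 𝓝[<] t₀, t ∈ relDerivedSet (relDerivedSet (s k)) := by
  have hC : (⋃ k, (s k \ relDerivedSet (s k)) ∪
      (relDerivedSet (s k) \ relDerivedSet (relDerivedSet (s k)))).Countable :=
    countable_iUnion fun k =>
      (countable_diff_relDerivedSet _).union (countable_diff_relDerivedSet _)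
  refine frequently_exists.1 ((hC.frequently_nhdsLT_notMem t₀).and_eventually hs |>.mono ?_)
  rintro t ⟨htC, k, hk⟩
  simp only [mem_iUnion, mem_union, Set.mem_sdiff, not_exists, not_or, not_and, not_not] at htC
  exact ⟨k, (htC k).2 ((htC k).1 hk)⟩

theorem exists_seq_strictMono_tendsto_of_frequently_nhdsLT {s : Set ℝ} {t₀ : ℝ}
    (hs : ∃ᶠ t in 𝓝[<] t₀, t ∈ s) :
    ∃ u : ℕ → ℝ, StrictMono u ∧ (∀ m, u m ∈ s ∩ Iio t₀) ∧ Tendsto u atTop (𝓝 t₀) := by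
  have hlub : IsLUB (s ∩ Iio t₀) t₀ := by
    refine ⟨fun t ht => ht.2.le, fun b hb => not_lt.1 fun hbt => ?_⟩
    obtain ⟨t, hts, hbt, htt⟩ := (hs.and_eventually (Ioo_mem_nhdsLT hbt)).exists
    exact (hb ⟨hts, htt⟩).not_gt hbt
  obtain ⟨u, hu, -, hlim, hmem⟩ :=
    hlub.exists_seq_strictMono_tendsto_of_notMem (fun h => lt_irrefl t₀ h.2)
      (hs.and_eventually self_mem_nhdsWithin).exists
  exact ⟨u, hu, hmem, hlim⟩

theorem deriv_eq_of_eqOn_of_mem_relDerivedSet {𝕜 F : Type*} [NontriviallyNormedField 𝕜]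
    [NormedAddCommGroup F] [NormedSpace 𝕜 F] {f g : 𝕜 → F} {s : Set 𝕜} {x : 𝕜}
    (hf : DifferentiableAt 𝕜 f x) (hg : DifferentiableAt 𝕜 g x) (hfg : EqOn f g s)
    (hx : x ∈ relDerivedSet s) : deriv f x = deriv g x :=
  hx.1.uniqueDiffWithinAt.eq_deriv s hf.hasDerivAt.hasDerivWithinAt
    (hg.hasDerivAt.hasDerivWithinAt.congr hfg (hfg hx.2))

theorem exists_eq_and_deriv_eq_of_eventually_exists_eq {𝕜 F ι : Type*} [NontriviallyNormedField 𝕜]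
    [NormedAddCommGroup F] [NormedSpace 𝕜 F] [Finite ι] {f : 𝕜 → F} {g : ι → 𝕜 → F} {t : 𝕜}
    (hmem : ∀ᶠ s in 𝓝 t, ∃ j, f s = g j s) (hf : DifferentiableAt 𝕜 f t)
    (hg : ∀ j, DifferentiableAt 𝕜 (g j) t) : ∃ j, f t = g j t ∧ deriv f t = deriv (g j) t := by
  obtain ⟨j, hj⟩ := frequently_exists.1
    (eventually_nhdsWithin_of_eventually_nhds (s := {t}ᶜ) hmem).frequently
  have hjt : f t = g j t := tendsto_nhds_unique_of_frequently_eq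
    (hf.continuousAt.tendsto.mono_left nhdsWithin_le_nhds)
    ((hg j).continuousAt.tendsto.mono_left nhdsWithin_le_nhds) hj
  exact ⟨j, hjt, deriv_eq_of_eqOn_of_mem_relDerivedSet hf (hg j) (fun _ hs => hs)
    ⟨accPt_iff_frequently_nhdsNE.2 hj, hjt⟩⟩

theorem exists_perm_frequently_nhdsLT_eq_of_map_univ_eq {ι : Type*} [Fintype ι]
    {y x : ι → ℝ → ℝ} {W : Set ℝ} {t₀ : ℝ} (hW : W ∈ 𝓝[<] t₀)
    (hroots : ∀ t ∈ W,
      Finset.univ.val.map (fun i => y i t) = Finset.univ.val.map (fun i => x i t))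
    (hy : ∀ i, ∀ t ∈ W, DifferentiableAt ℝ (y i) t)
    (hy2 : ∀ i, ∀ t ∈ W, DifferentiableAt ℝ (deriv (y i)) t)
    (hx : ∀ i, ∀ t ∈ W, DifferentiableAt ℝ (x i) t)
    (hx2 : ∀ i, ∀ t ∈ W, DifferentiableAt ℝ (deriv (x i)) t) :
    ∃ σ : Equiv.Perm ι, ∃ᶠ t in 𝓝[<] t₀, t ∈ W ∧ ∀ i, y (σ i) t = x i t ∧
      deriv (y (σ i)) t = deriv (x i) t ∧ deriv (deriv (y (σ i))) t = deriv (deriv (x i)) t := by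
  set E : Equiv.Perm ι → Set ℝ := fun σ => {t ∈ W | ∀ i, y (σ i) t = x i t}
  obtain ⟨σ, hσ⟩ := exists_frequently_nhdsLT_mem_relDerivedSet_relDerivedSet (s := E) <|
    Filter.mem_of_superset hW fun t ht =>
      (Fintype.exists_perm_comp_eq_of_map_univ_eq (hroots t ht)).imp fun _ hσ => ⟨ht, hσ⟩
  refine ⟨σ, hσ.mono fun t ht => ⟨ht.2.2.1, fun i => ?_⟩⟩
  have h1 : EqOn (deriv (y (σ i))) (deriv (x i)) (relDerivedSet (E σ)) := fun s hs =>
    deriv_eq_of_eqOn_of_mem_relDerivedSet (hy _ s hs.2.1) (hx i s hs.2.1) (fun _ hu => hu.2 i) hs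
  exact ⟨ht.2.2.2 i, h1 ht.2,
    deriv_eq_of_eqOn_of_mem_relDerivedSet (hy2 _ t ht.2.2.1) (hx2 i t ht.2.2.1) h1 ht⟩

theorem IsPreconnected.forall_lt_of_forall_ne {X : Type*} [TopologicalSpace X] {s : Set X}
    (hs : IsPreconnected s) {f : X → ℝ} (hf : ContinuousOn f s) {c : ℝ}
    (hne : ∀ x ∈ s, f x ≠ c) {z : X} (hz : z ∈ s) (hzc : f z < c) : ∀ x ∈ s, f x < c := by
  intro x hx
  by_contra! hcx
  obtain ⟨w, hw, hwc⟩ := hs.intermediate_value hz hx hf ⟨hzc.le, hcx⟩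
  exact hne w hw hwc

theorem tendsto_nhdsLT_zero_of_eq_branch {ι : Type*} [Finite ι] {t₀ : ℝ} {φ : ℝ → ℝ}
    {h : ι → ℝ → ℝ} (hφ : ∀ᶠ t in 𝓝[<] t₀, ContinuousAt φ t)
    (hmem : ∀ᶠ t in 𝓝[<] t₀, ∃ j, φ t = h j t)
    (hlim : ∀ j, Tendsto (fun t => |h j t|) (𝓝[<] t₀) atTop ∨
      ∃ L, Tendsto (h j) (𝓝[<] t₀) (𝓝 L))
    (hzero : ∃ᶠ t in 𝓝[<] t₀, φ t = 0) :
    Tendsto φ (𝓝[<] t₀) (𝓝 0) := by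
  rw [Metric.tendsto_nhds]
  intro ε hε
  -- `|φ|` cannot cross a level `ε'` that no branch approaches, and it is frequently `0 < ε'`.
  -- (`limUnder` is junk for the diverging branches: avoiding it as well costs nothing.)
  obtain ⟨ε', ⟨hε'0, hε'ε⟩, hε'⟩ := (Ioo_infinite hε).exists_notMem_finite
    (finite_range fun j => |limUnder (𝓝[<] t₀) (h j)|)
  have havoid : ∀ j, ∀ᶠ t in 𝓝[<] t₀, |h j t| ≠ ε' := by
    intro j
    rcases hlim j with hj | ⟨L, hL⟩
    · exact (hj.eventually_gt_atTop ε').mono fun t ht => ht.ne'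
    · refine hL.abs.eventually_ne fun hLε => hε' ⟨j, ?_⟩
      simp only [hL.limUnder_eq, hLε]
  obtain ⟨δ, hδ, hδsub⟩ :=
    mem_nhdsLT_iff_exists_Ioo_subset.1 (hφ.and (hmem.and (eventually_all.2 havoid)))
  have hsmall : ∀ t ∈ Ioo δ t₀, |φ t| < ε' := by
    obtain ⟨z, hz, hzδ⟩ := (hzero.and_eventually (Ioo_mem_nhdsLT hδ)).exists
    refine isPreconnected_Ioo.forall_lt_of_forall_ne (f := fun t => |φ t|)
      (fun t ht => (hδsub ht).1.abs.continuousWithinAt) (fun t ht => ?_) hzδ (by simpa [hz])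
    obtain ⟨-, ⟨j, hj⟩, hne⟩ := hδsub ht
    simpa only [hj] using hne j
  filter_upwards [Ioo_mem_nhdsLT hδ] with t ht
  rw [Real.dist_0_eq_abs]
  exact (hsmall t ht).trans hε'ε

theorem tendsto_abs_div_sub_atTop_or_tendsto_div_sub {g : ℝ → ℝ} {t₀ : ℝ}
    (hg : DifferentiableAt ℝ g t₀) :
    Tendsto (fun s => |g s / (s - t₀)|) (𝓝[<] t₀) atTop ∨
      ∃ L, Tendsto (fun s => g s / (s - t₀)) (𝓝[<] t₀) (𝓝 L) := by
  by_cases h0 : g t₀ = 0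
  · refine Or.inr ⟨deriv g t₀, ?_⟩
    refine ((hasDerivAt_iff_tendsto_slope.1 hg.hasDerivAt).mono_left
      (nhdsWithin_mono _ fun s hs => ne_of_lt hs)).congr fun s => ?_
    rw [slope_def_field, h0, sub_zero]
  · left
    have hnum : Tendsto (fun s => |g s|) (𝓝[<] t₀) (𝓝 |g t₀|) :=
      hg.continuousAt.tendsto.abs.mono_left nhdsWithin_le_nhds
    have hden : Tendsto (fun s => |s - t₀|) (𝓝[<] t₀) (𝓝[>] 0) := by
      refine tendsto_nhdsWithin_of_tendsto_nhds_of_eventually_within _ ?_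
        (eventually_nhdsWithin_of_forall fun s (hs : s < t₀) =>
          abs_pos.2 (sub_ne_zero.2 hs.ne))
      simpa using ((continuous_sub_right t₀).abs.tendsto t₀).mono_left nhdsWithin_le_nhds
    simpa only [abs_div, div_eq_mul_inv, Pi.inv_apply, abs_mul, abs_inv] using
      hnum.pos_mul_atTop (abs_pos.2 h0) hden.inv_tendsto_nhdsGT_zero

section Piecewise

variable {α β : Type*} [LinearOrder α] [TopologicalSpace α] [OrderClosedTopology α]
  {f g : α → β} {t₀ t : α}

theorem ite_lt_eventuallyEq_left (ht : t < t₀) :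
    (fun s => if s < t₀ then f s else g s) =ᶠ[𝓝 t] f :=
  (eventually_lt_nhds ht).mono fun _ hs => if_pos hs

theorem ite_lt_eventuallyEq_right (ht : t₀ < t) :
    (fun s => if s < t₀ then f s else g s) =ᶠ[𝓝 t] g :=
  (eventually_gt_nhds ht).mono fun _ hs => if_neg hs.not_gt

end Piecewise

section PiecewiseDeriv

variable {f g : ℝ → ℝ} {t₀ : ℝ}

theorem hasDerivAt_ite_lt_of_tendsto_div (hg : DifferentiableAt ℝ g t₀)
    (hfg : Tendsto (fun s => (f s - g s) / (s - t₀)) (𝓝[<] t₀) (𝓝 0)) :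
    HasDerivAt (fun s => if s < t₀ then f s else g s) (deriv g t₀) t₀ := by
  have hslope := hasDerivAt_iff_tendsto_slope.1 hg.hasDerivAt
  rw [hasDerivAt_iff_tendsto_slope, ← nhdsLT_sup_nhdsGT, tendsto_sup]
  constructor
  · have := hfg.add (hslope.mono_left (nhdsWithin_mono _ fun s hs => ne_of_lt hs))
    rw [zero_add] at this
    refine this.congr' (eventually_nhdsWithin_of_forall fun s (hs : s < t₀) => ?_)
    simp only [slope_def_field, if_pos hs, lt_irrefl, if_false]
    ring
  · refine (hslope.mono_left (nhdsWithin_mono _ fun s hs => ne_of_gt hs)).congr'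
      (eventually_nhdsWithin_of_forall fun s (hs : t₀ < s) => ?_)
    simp only [slope_def_field, if_neg hs.not_gt, lt_irrefl, if_false]

theorem deriv_ite_lt (h : HasDerivAt (fun s => if s < t₀ then f s else g s) (deriv g t₀) t₀) :
    deriv (fun s => if s < t₀ then f s else g s) =
      fun s => if s < t₀ then deriv f s else deriv g s := by
  funext t
  rcases lt_trichotomy t t₀ with ht | rfl | ht
  · rw [if_pos ht, (ite_lt_eventuallyEq_left ht).deriv_eq]
  · rw [if_neg (lt_irrefl t), h.deriv]
  · rw [if_neg ht.not_gt, (ite_lt_eventuallyEq_right ht).deriv_eq]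

theorem differentiableAt_ite_lt {t : ℝ} (hf : t < t₀ → DifferentiableAt ℝ f t)
    (hg : t₀ < t → DifferentiableAt ℝ g t)
    (h₀ : DifferentiableAt ℝ (fun s => if s < t₀ then f s else g s) t₀) :
    DifferentiableAt ℝ (fun s => if s < t₀ then f s else g s) t := by
  rcases lt_trichotomy t t₀ with ht | rfl | ht
  · exact (ite_lt_eventuallyEq_left ht).differentiableAt_iff.2 (hf ht)
  · exact h₀
  · exact (ite_lt_eventuallyEq_right ht).differentiableAt_iff.2 (hg ht)

theorem hasDerivAt_ite_lt_of_eq_branch {ι : Type*} [Finite ι] {g : ι → ℝ → ℝ} {i : ι}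
    (hf : ∀ᶠ t in 𝓝[<] t₀, ContinuousAt f t) (hgi : ∀ᶠ t in 𝓝[<] t₀, ContinuousAt (g i) t)
    (hg : ∀ j, DifferentiableAt ℝ (g j) t₀) (hmem : ∀ᶠ t in 𝓝[<] t₀, ∃ j, f t = g j t)
    (hfreq : ∃ᶠ t in 𝓝[<] t₀, f t = g i t) :
    HasDerivAt (fun s => if s < t₀ then f s else g i s) (deriv (g i) t₀) t₀ := by
  refine hasDerivAt_ite_lt_of_tendsto_div (hg i)
    (tendsto_nhdsLT_zero_of_eq_branch (h := fun j s => (g j s - g i s) / (s - t₀)) ?_ ?_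
      (fun j => tendsto_abs_div_sub_atTop_or_tendsto_div_sub ((hg j).sub (hg i))) ?_)
  · filter_upwards [hf, hgi, self_mem_nhdsWithin] with t hft hgt (ht : t < t₀)
    exact (hft.sub hgt).div (continuousAt_id.sub continuousAt_const) (sub_ne_zero.2 ht.ne)
  · filter_upwards [hmem] with t ⟨j, hj⟩ using ⟨j, by rw [hj]⟩
  · exact hfreq.mono fun t ht => by rw [ht, sub_self, zero_div]

theorem hasDerivAt_ite_lt_and_deriv_of_eq_branch {ι : Type*} [Finite ι] {f : ℝ → ℝ}
    {g : ι → ℝ → ℝ} {W : Set ℝ} {t₀ : ℝ} {i : ι} (hWo : IsOpen W) (hW : W ∈ 𝓝[<] t₀)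
    (hmem : ∀ t ∈ W, ∃ j, f t = g j t) (hf : ∀ t ∈ W, DifferentiableAt ℝ f t)
    (hf2 : ∀ t ∈ W, DifferentiableAt ℝ (deriv f) t)
    (hg : ∀ j, ∀ t ∈ insert t₀ W, DifferentiableAt ℝ (g j) t)
    (hg2 : ∀ j, ∀ t ∈ insert t₀ W, DifferentiableAt ℝ (deriv (g j)) t)
    (hfreq : ∃ᶠ t in 𝓝[<] t₀, f t = g i t ∧ deriv f t = deriv (g i) t) :
    HasDerivAt (fun s => if s < t₀ then f s else g i s) (deriv (g i) t₀) t₀ ∧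
      HasDerivAt (fun s => if s < t₀ then deriv f s else deriv (g i) s)
        (deriv (deriv (g i)) t₀) t₀ := by
  have hgW (j : ι) (t : ℝ) (ht : t ∈ W) := hg j t (mem_insert_of_mem t₀ ht)
  refine ⟨hasDerivAt_ite_lt_of_eq_branch
    (mem_of_superset hW fun t ht => (hf t ht).continuousAt)
    (mem_of_superset hW fun t ht => (hgW i t ht).continuousAt)
    (fun j => hg j t₀ (mem_insert t₀ W)) (mem_of_superset hW hmem) (hfreq.mono fun _ h => h.1),
    hasDerivAt_ite_lt_of_eq_branch (g := fun j => deriv (g j))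
    (mem_of_superset hW fun t ht => (hf2 t ht).continuousAt)
    (mem_of_superset hW fun t ht => (hg2 i t (mem_insert_of_mem t₀ ht)).continuousAt)
    (fun j => hg2 j t₀ (mem_insert t₀ W)) (mem_of_superset hW fun t ht => ?_)
    (hfreq.mono fun _ h => h.2)⟩
  obtain ⟨j, -, hj⟩ := exists_eq_and_deriv_eq_of_eventually_exists_eq
    (mem_of_superset (hWo.mem_nhds ht) hmem) (hf t ht) fun j => hgW j t ht
  exact ⟨j, hj⟩

end PiecewiseDeriv

theorem IsRootParamOn.ite_lt {n : ℕ} {a : ℕ → ℝ → ℝ} {S T : Set ℝ} {y x : Fin n → ℝ → ℝ}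
    (hy : IsRootParamOn n a S y) (hx : IsRootParamOn n a T x) (σ : Equiv.Perm (Fin n))
    (t₀ : ℝ) :
    IsRootParamOn n a (S ∩ Iio t₀ ∪ T ∩ Ici t₀)
      (fun i t => if t < t₀ then y (σ i) t else x i t) := by
  rintro t (⟨hS, ht⟩ | ⟨hT, ht⟩)
  · simp only [if_pos (show t < t₀ from ht)]
    have hσ := congrArg (Multiset.map fun i => y i t) (Multiset.map_univ_val_equiv σ)
    rw [Multiset.map_map] at hσ
    rw [hy t hS, ← hσ]
    rfl
  · simp only [if_neg (not_lt.2 (show t₀ ≤ t from ht))]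
    exact hx t hT

open Filter Topology in
theorem pasting_twice_differentiable_parametrizations_general
    (n : ℕ) (a : ℕ → ℝ → ℝ)
    (I : Set ℝ) (hIopen : IsOpen I) (hIconn : I.OrdConnected) (t₀ : ℝ) (ht₀ : t₀ ∈ I)
    (y : Fin n → ℝ → ℝ)
    (hy : IsRootParamOn n a (I ∩ Set.Iio t₀) y)
    (hydiff : ∀ i, ∀ t ∈ I ∩ Set.Iio t₀, DifferentiableAt ℝ (y i) t)
    (hydiff2 : ∀ i, ∀ t ∈ I ∩ Set.Iio t₀, DifferentiableAt ℝ (deriv (y i)) t)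
    (V : Set ℝ) (hVopen : IsOpen V) (ht₀V : t₀ ∈ V)
    (x : Fin n → ℝ → ℝ)
    (hx : IsRootParamOn n a V x)
    (hxdiff : ∀ i, ∀ t ∈ V, DifferentiableAt ℝ (x i) t)
    (hxdiff2 : ∀ i, ∀ t ∈ V, DifferentiableAt ℝ (deriv (x i)) t) :
    ∃ π : Equiv.Perm (Fin n), ∃ tm : ℕ → ℝ,
      (∀ m, tm m ∈ I ∩ Set.Iio t₀) ∧ StrictMono tm ∧ Tendsto tm atTop (𝓝 t₀) ∧
      (∀ i : Fin n, ∀ m : ℕ,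
        y (π i) (tm m) = x i (tm m) ∧
        deriv (y (π i)) (tm m) = deriv (x i) (tm m) ∧
        deriv (deriv (y (π i))) (tm m) = deriv (deriv (x i)) (tm m)) ∧
      ∃ J : Set ℝ, IsOpen J ∧ J.OrdConnected ∧ I ∩ Set.Iic t₀ ⊆ J ∧
        IsRootParamOn n a J (fun i t => if t < t₀ then y (π i) t else x i t) ∧
        (∀ i, ∀ t ∈ J,
          DifferentiableAt ℝ (fun s => if s < t₀ then y (π i) s else x i s) t) ∧
        (∀ i, ∀ t ∈ J,
          DifferentiableAt ℝ (deriv (fun s => if s < t₀ then y (π i) s else x i s)) t) := by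
  obtain ⟨r, hr, hball⟩ : ∃ r > 0, Ioo (t₀ - r) (t₀ + r) ⊆ I ∩ V := by
    obtain ⟨r, hr, hball⟩ := Metric.isOpen_iff.1 (hIopen.inter hVopen) t₀ ⟨ht₀, ht₀V⟩
    exact ⟨r, hr, by rwa [Real.ball_eq_Ioo] at hball⟩
  set W := Ioo (t₀ - r) t₀
  have hWI : W ⊆ I ∩ Iio t₀ := fun t ht => ⟨(hball ⟨ht.1, by linarith [ht.2]⟩).1, ht.2⟩
  have hWV : insert t₀ W ⊆ V :=
    insert_subset ht₀V fun t ht => (hball ⟨ht.1, by linarith [ht.2]⟩).2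
  have hJV : ∀ t ∈ I ∩ Iio (t₀ + r), t₀ ≤ t → t ∈ V := fun t ht h => (hball ⟨by linarith, ht.2⟩).2
  have hroots (t : ℝ) (ht : t ∈ W) : Finset.univ.val.map (fun i => y i t) =
      Finset.univ.val.map (fun i => x i t) :=
    (hy t (hWI ht)).symm.trans (hx t (hWV (mem_insert_of_mem t₀ ht)))
  have hW : W ∈ 𝓝[<] t₀ := Ioo_mem_nhdsLT (by linarith)
  obtain ⟨σ, hσ⟩ := exists_perm_frequently_nhdsLT_eq_of_map_univ_eq hW hroots
    (fun i t ht => hydiff i t (hWI ht)) (fun i t ht => hydiff2 i t (hWI ht))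
    (fun i t ht => hxdiff i t (hWV (mem_insert_of_mem t₀ ht)))
    (fun i t ht => hxdiff2 i t (hWV (mem_insert_of_mem t₀ ht)))
  obtain ⟨tm, htm_mono, htm_mem, htm_lim⟩ := exists_seq_strictMono_tendsto_of_frequently_nhdsLT hσ
  have hpaste (i : Fin n) := hasDerivAt_ite_lt_and_deriv_of_eq_branch isOpen_Ioo hW
    (fun t ht => by
      obtain ⟨τ, hτ⟩ := Fintype.exists_perm_comp_eq_of_map_univ_eq (hroots t ht).symm
      exact ⟨τ (σ i), (hτ (σ i)).symm⟩)
    (fun t ht => hydiff (σ i) t (hWI ht)) (fun t ht => hydiff2 (σ i) t (hWI ht))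
    (fun j t ht => hxdiff j t (hWV ht)) (fun j t ht => hxdiff2 j t (hWV ht))
    (hσ.mono fun t ht => ⟨(ht.2 i).1, (ht.2 i).2.1⟩)
  refine ⟨σ, tm, fun m => hWI (htm_mem m).1.1, htm_mono, htm_lim, fun i m => (htm_mem m).1.2 i,
    I ∩ Iio (t₀ + r), hIopen.inter isOpen_Iio, hIconn.inter ordConnected_Iio,
    fun t ht => ⟨ht.1, ht.2.trans_lt (lt_add_of_pos_right t₀ hr)⟩, fun t ht => ?_,
    fun i t ht => differentiableAt_ite_lt (fun h => hydiff _ t ⟨ht.1, h⟩)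
      (fun h => hxdiff i t (hJV t ht h.le)) (hpaste i).1.differentiableAt, fun i t ht => ?_⟩
  · refine IsRootParamOn.ite_lt hy hx σ t₀ t ?_
    rcases lt_or_ge t t₀ with h | h
    exacts [Or.inl ⟨⟨ht.1, h⟩, h⟩, Or.inr ⟨hJV t ht h, h⟩]
  · rw [deriv_ite_lt (hpaste i).1]
    exact differentiableAt_ite_lt (fun h => hydiff2 _ t ⟨ht.1, h⟩)
      (fun h => hxdiff2 i t (hJV t ht h.le)) (hpaste i).2.differentiableAt

open Filter Topology in
theorem pasting_twice_differentiable_parametrizations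
    (n : ℕ) (hn : 1 ≤ n) (a : ℕ → ℝ → ℝ)
    (hcont : ∀ k ∈ Finset.Icc 1 n, Continuous (a k))
    (hreal : ∀ t : ℝ, ((curvePoly n a t).roots).card = n)
    (I : Set ℝ) (hIopen : IsOpen I) (hIconn : I.OrdConnected) (t₀ : ℝ) (ht₀ : t₀ ∈ I)
    (y : Fin n → ℝ → ℝ)
    (hy : IsRootParamOn n a (I ∩ Set.Iio t₀) y)
    (hydiff : ∀ i, ∀ t ∈ I ∩ Set.Iio t₀, DifferentiableAt ℝ (y i) t)
    (hydiff2 : ∀ i, ∀ t ∈ I ∩ Set.Iio t₀, DifferentiableAt ℝ (deriv (y i)) t)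
    (V : Set ℝ) (hVopen : IsOpen V) (ht₀V : t₀ ∈ V)
    (x : Fin n → ℝ → ℝ)
    (hx : IsRootParamOn n a V x)
    (hxdiff : ∀ i, ∀ t ∈ V, DifferentiableAt ℝ (x i) t)
    (hxdiff2 : ∀ i, ∀ t ∈ V, DifferentiableAt ℝ (deriv (x i)) t) :
    ∃ π : Equiv.Perm (Fin n), ∃ tm : ℕ → ℝ,
      (∀ m, tm m ∈ I ∩ Set.Iio t₀) ∧ StrictMono tm ∧ Tendsto tm atTop (𝓝 t₀) ∧
      (∀ i : Fin n, ∀ m : ℕ,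
        y (π i) (tm m) = x i (tm m) ∧
        deriv (y (π i)) (tm m) = deriv (x i) (tm m) ∧
        deriv (deriv (y (π i))) (tm m) = deriv (deriv (x i)) (tm m)) ∧
      ∃ J : Set ℝ, IsOpen J ∧ J.OrdConnected ∧ I ∩ Set.Iic t₀ ⊆ J ∧
        IsRootParamOn n a J (fun i t => if t < t₀ then y (π i) t else x i t) ∧
        (∀ i, ∀ t ∈ J,
          DifferentiableAt ℝ (fun s => if s < t₀ then y (π i) s else x i s) t) ∧
        (∀ i, ∀ t ∈ J,
          DifferentiableAt ℝ (deriv (fun s => if s < t₀ then y (π i) s else x i s)) t) :=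
  pasting_twice_differentiable_parametrizations_general n a I hIopen hIconn t₀ ht₀ y hy hydiff
    hydiff2 V hVopen ht₀V x hx hxdiff hxdiff2
end
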